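/- arXiv:2602.04655 — 5 statements merged into one kernel-verified Lean document; each statement's English description precedes it below -/
import Mathlib

section
/- Let H0 and H1 be groups that are virtually locally indicable. Then the free product H0 * H1 is virtually locally indicable. -/
/-- A group is locally indicable if every nontrivial finitely generated subgroup admits
a surjective homomorphism onto the infinite cyclic group `ℤ`. -/
def LocallyIndicable (G : Type*) [Group G] : Prop :=
  ∀ H : Subgroup G, H ≠ ⊥ → H.FG → ∃ φ : H →* Multiplicative ℤ, Function.Surjective φ

/-- A group is virtually locally indicable if it has a finite-index subgroup which is
locally indicable. -/
def VirtuallyLocallyIndicable (G : Type*) [Group G] : Prop :=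
  ∃ H : Subgroup G, H.FiniteIndex ∧ LocallyIndicable H


open Monoid Coprod Function

namespace CoprodKernel

variable (G H : Type*) [Group G] [Group H]

abbrev X := {p : G × H // p.1 ≠ 1 ∧ p.2 ≠ 1}

variable {G H}

open scoped Classical in
noncomputable def cOf (a : G) (b : H) : FreeGroup (X G H) :=
  if h : a = 1 ∨ b = 1 then 1 else FreeGroup.of ⟨(a, b), not_or.mp h⟩

@[simp] lemma cOf_one_left (b : H) : (cOf 1 b : FreeGroup (X G H)) = 1 := dif_pos (Or.inl rfl)

@[simp] lemma cOf_one_right (a : G) : (cOf a 1 : FreeGroup (X G H)) = 1 := dif_pos (Or.inr rfl)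

lemma cOf_eq_of (p : X G H) : cOf p.1.1 p.1.2 = FreeGroup.of p := by
  rw [cOf, dif_neg (not_or.mpr p.2)]

noncomputable def GammaG (g : G) : FreeGroup (X G H) →* FreeGroup (X G H) :=
  FreeGroup.lift fun p => cOf (g * p.1.1) p.1.2 * (cOf g p.1.2)⁻¹

noncomputable def GammaH (k : H) : FreeGroup (X G H) →* FreeGroup (X G H) :=
  FreeGroup.lift fun p => (cOf p.1.1 k)⁻¹ * cOf p.1.1 (k * p.1.2)

lemma GammaG_cOf (g a : G) (b : H) :
    GammaG g (cOf a b) = cOf (g * a) b * (cOf g b)⁻¹ := by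
  by_cases hb : b = 1
  · simp [hb]
  by_cases ha : a = 1
  · simp [ha]
  rw [show cOf a b = FreeGroup.of (⟨(a,b),ha,hb⟩ : X G H) from cOf_eq_of ⟨(a,b),ha,hb⟩]
  simp [GammaG]

lemma GammaH_cOf (k : H) (a : G) (b : H) :
    GammaH k (cOf a b) = (cOf a k)⁻¹ * cOf a (k * b) := by
  by_cases ha : a = 1
  · simp [ha]
  by_cases hb : b = 1
  · simp [hb]
  rw [show cOf a b = FreeGroup.of (⟨(a,b),ha,hb⟩ : X G H) from cOf_eq_of ⟨(a,b),ha,hb⟩]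
  simp [GammaH]

noncomputable def GammaGHom : G →* Monoid.End (FreeGroup (X G H)) where
  toFun := GammaG
  map_one' := FreeGroup.ext_hom _ _ fun p => by
    show GammaG 1 (FreeGroup.of p) = FreeGroup.of p
    rw [show FreeGroup.of p = cOf p.1.1 p.1.2 from (cOf_eq_of _).symm, GammaG_cOf]
    simp [cOf_eq_of]
  map_mul' g g' := FreeGroup.ext_hom _ _ fun p => by
    rw [show FreeGroup.of p = cOf p.1.1 p.1.2 from (cOf_eq_of _).symm]
    show GammaG (g * g') _ = GammaG g (GammaG g' _)
    simp only [GammaG_cOf, map_mul, map_inv, mul_assoc]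
    group

noncomputable def GammaHHom : H →* Monoid.End (FreeGroup (X G H)) where
  toFun := GammaH
  map_one' := FreeGroup.ext_hom _ _ fun p => by
    show GammaH 1 (FreeGroup.of p) = FreeGroup.of p
    rw [show FreeGroup.of p = cOf p.1.1 p.1.2 from (cOf_eq_of _).symm, GammaH_cOf]
    simp [cOf_eq_of]
  map_mul' k k' := FreeGroup.ext_hom _ _ fun p => by
    rw [show FreeGroup.of p = cOf p.1.1 p.1.2 from (cOf_eq_of _).symm]
    show GammaH (k * k') _ = GammaH k (GammaH k' _)
    simp only [GammaH_cOf, map_mul, map_inv, mul_assoc]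
    group


variable (G H)
noncomputable abbrev S := FreeGroup (X G H) × G × H
variable {G H}

noncomputable def rhoG : G →* Function.End (S G H) where
  toFun g := fun s => (GammaGHom g s.1, g * s.2.1, s.2.2)
  map_one' := funext fun s => by
    show (GammaGHom (1 : G) s.1, 1 * s.2.1, s.2.2) = s
    simp
  map_mul' g g' := funext fun s => by
    show (GammaGHom (g * g') s.1, (g * g') * s.2.1, s.2.2)
      = (GammaGHom g (GammaGHom g' s.1), g * (g' * s.2.1), s.2.2)
    rw [map_mul, mul_assoc]
    rfl

noncomputable def rhoH : H →* Function.End (S G H) where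
  toFun k := fun s => (GammaHHom k s.1 * (cOf s.2.1 k)⁻¹, s.2.1, k * s.2.2)
  map_one' := funext fun s => by
    show (GammaHHom (1 : H) s.1 * (cOf s.2.1 1)⁻¹, s.2.1, 1 * s.2.2) = s
    simp
  map_mul' k k' := funext fun s => by
    show (GammaHHom (k * k') s.1 * (cOf s.2.1 (k * k'))⁻¹, s.2.1, (k * k') * s.2.2)
      = (GammaHHom k (GammaHHom k' s.1 * (cOf s.2.1 k')⁻¹) * (cOf s.2.1 k)⁻¹,
          s.2.1, k * (k' * s.2.2))
    rw [map_mul, mul_assoc]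
    refine Prod.ext ?_ rfl
    show GammaHHom k ((GammaHHom k') s.1) * (cOf s.2.1 (k * k'))⁻¹
      = GammaHHom k ((GammaHHom k') s.1 * (cOf s.2.1 k')⁻¹) * (cOf s.2.1 k)⁻¹
    rw [map_mul, map_inv,
      show (GammaHHom k : Monoid.End (FreeGroup (X G H))) (cOf s.2.1 k')
        = (cOf s.2.1 k)⁻¹ * cOf s.2.1 (k * k') from GammaH_cOf k s.2.1 k']
    group

noncomputable def rho : (G ∗ H) →* Function.End (S G H) := Coprod.lift rhoG rhoH

noncomputable def gamma : (G ∗ H) →* Monoid.End (FreeGroup (X G H)) :=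
  Coprod.lift GammaGHom GammaHHom

noncomputable def Phi : FreeGroup (X G H) →* (G ∗ H) :=
  FreeGroup.lift fun p => inl p.1.1 * inr p.1.2 * (inl p.1.1)⁻¹ * (inr p.1.2)⁻¹

lemma Phi_cOf (a : G) (b : H) :
    Phi (cOf a b) = inl a * inr b * (inl a)⁻¹ * (inr b)⁻¹ := by
  by_cases ha : a = 1
  · simp [ha]
  by_cases hb : b = 1
  · simp [hb]
  rw [show cOf a b = FreeGroup.of (⟨(a,b),ha,hb⟩ : X G H) from cOf_eq_of ⟨(a,b),ha,hb⟩]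
  simp [Phi]

lemma toProd_Phi (w : FreeGroup (X G H)) : Coprod.toProd (Phi w) = 1 := by
  have : (Coprod.toProd.comp Phi : FreeGroup (X G H) →* G × H) = 1 :=
    FreeGroup.ext_hom _ _ fun p => by
      simp [Phi, Prod.ext_iff]
  calc Coprod.toProd (Phi w) = (Coprod.toProd.comp Phi) w := rfl
    _ = 1 := by rw [this]; rfl

lemma Phi_gammaG_cOf (g a : G) (b : H) :
    Phi (GammaGHom g (cOf a b)) = inl g * Phi (cOf a b) * (inl g)⁻¹ := by
  rw [show (GammaGHom g : Monoid.End (FreeGroup (X G H))) (cOf a b)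
      = cOf (g * a) b * (cOf g b)⁻¹ from GammaG_cOf g a b]
  rw [map_mul, map_inv, Phi_cOf, Phi_cOf, Phi_cOf, map_mul]
  group

lemma Phi_gammaH_cOf (k : H) (a : G) (b : H) :
    Phi (GammaHHom k (cOf a b)) = inr k * Phi (cOf a b) * (inr k)⁻¹ := by
  rw [show (GammaHHom k : Monoid.End (FreeGroup (X G H))) (cOf a b)
      = (cOf a k)⁻¹ * cOf a (k * b) from GammaH_cOf k a b]
  rw [map_mul, map_inv, Phi_cOf, Phi_cOf, Phi_cOf, map_mul]
  group

lemma Phi_gammaG (g : G) (w : FreeGroup (X G H)) :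
    Phi (GammaGHom g w) = inl g * Phi w * (inl g)⁻¹ := by
  induction w using FreeGroup.induction_on with
  | C1 => simp
  | of p =>
    show Phi (GammaGHom g (FreeGroup.of p)) = inl g * Phi (FreeGroup.of p) * (inl g)⁻¹
    rw [← cOf_eq_of p]
    exact Phi_gammaG_cOf g _ _
  | inv_of p ih =>
    show Phi (GammaGHom g (FreeGroup.of p)⁻¹) = inl g * Phi (FreeGroup.of p)⁻¹ * (inl g)⁻¹
    replace ih : Phi (GammaGHom g (FreeGroup.of p)) = inl g * Phi (FreeGroup.of p) * (inl g)⁻¹ := ih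
    simp only [map_inv]
    rw [ih]
    group
  | mul x y ihx ihy =>
    simp only [map_mul]
    rw [ihx, ihy]
    group

lemma Phi_gammaH (k : H) (w : FreeGroup (X G H)) :
    Phi (GammaHHom k w) = inr k * Phi w * (inr k)⁻¹ := by
  induction w using FreeGroup.induction_on with
  | C1 => simp
  | of p =>
    show Phi (GammaHHom k (FreeGroup.of p)) = inr k * Phi (FreeGroup.of p) * (inr k)⁻¹
    rw [← cOf_eq_of p]
    exact Phi_gammaH_cOf k _ _
  | inv_of p ih =>
    show Phi (GammaHHom k (FreeGroup.of p)⁻¹) = inr k * Phi (FreeGroup.of p)⁻¹ * (inr k)⁻¹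
    replace ih : Phi (GammaHHom k (FreeGroup.of p)) = inr k * Phi (FreeGroup.of p) * (inr k)⁻¹ := ih
    simp only [map_inv]
    rw [ih]
    group
  | mul x y ihx ihy =>
    simp only [map_mul]
    rw [ihx, ihy]
    group

noncomputable def eval : S G H → (G ∗ H) := fun s => Phi s.1 * inl s.2.1 * inr s.2.2

lemma eval_rho (x : G ∗ H) : ∀ s, eval (rho x s) = x * eval s := by
  induction x using Coprod.induction_on with
  | inl g =>
    intro s
    show eval (rhoG g s) = _
    show Phi (GammaGHom g s.1) * inl (g * s.2.1) * inr s.2.2 = _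
    rw [Phi_gammaG, map_mul]
    show _ = inl g * (Phi s.1 * inl s.2.1 * inr s.2.2)
    group
  | inr k =>
    intro s
    show eval (rhoH k s) = _
    show Phi (GammaHHom k s.1 * (cOf s.2.1 k)⁻¹) * inl s.2.1 * inr (k * s.2.2) = _
    rw [map_mul, map_inv, Phi_gammaH, Phi_cOf, map_mul]
    show _ = inr k * (Phi s.1 * inl s.2.1 * inr s.2.2)
    group
  | mul x y ihx ihy =>
    intro s
    rw [map_mul]
    show eval (rho x (rho y s)) = _
    rw [ihx, ihy, mul_assoc]


@[simp] lemma GammaGHom_cOf (g a : G) (b : H) :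
    (GammaGHom g : Monoid.End (FreeGroup (X G H))) (cOf a b) = cOf (g * a) b * (cOf g b)⁻¹ :=
  GammaG_cOf g a b

@[simp] lemma GammaHHom_cOf (k : H) (a : G) (b : H) :
    (GammaHHom k : Monoid.End (FreeGroup (X G H))) (cOf a b) = (cOf a k)⁻¹ * cOf a (k * b) :=
  GammaH_cOf k a b

lemma gamma_Phi_of (p : X G H) (v : FreeGroup (X G H)) :
    gamma (Phi (FreeGroup.of p)) v = FreeGroup.of p * v * (FreeGroup.of p)⁻¹ := by
  obtain ⟨⟨c, d⟩, hc, hd⟩ := p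
  have hPhi : Phi (FreeGroup.of (⟨(c, d), hc, hd⟩ : X G H))
      = inl c * inr d * inl c⁻¹ * inr d⁻¹ := by
    rw [← cOf_eq_of ⟨(c, d), hc, hd⟩, Phi_cOf, map_inv, map_inv]
  have key : ∀ u : FreeGroup (X G H),
      gamma (Phi (FreeGroup.of (⟨(c, d), hc, hd⟩ : X G H))) u
        = (GammaGHom c : Monoid.End (FreeGroup (X G H)))
            ((GammaHHom d : Monoid.End (FreeGroup (X G H)))
              ((GammaGHom c⁻¹ : Monoid.End (FreeGroup (X G H)))
                ((GammaHHom d⁻¹ : Monoid.End (FreeGroup (X G H))) u))) := by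
    intro u
    rw [hPhi]
    simp only [map_mul, Coprod.lift_apply_inl, Coprod.lift_apply_inr, gamma]
    rfl
  induction v using FreeGroup.induction_on with
  | C1 => simp [key]
  | of q =>
    rw [key]
    show (GammaGHom c : Monoid.End (FreeGroup (X G H)))
            ((GammaHHom d : Monoid.End (FreeGroup (X G H)))
              ((GammaGHom c⁻¹ : Monoid.End (FreeGroup (X G H)))
                ((GammaHHom d⁻¹ : Monoid.End (FreeGroup (X G H))) (FreeGroup.of q))))
      = FreeGroup.of (⟨(c, d), hc, hd⟩ : X G H) * FreeGroup.of q
          * (FreeGroup.of (⟨(c, d), hc, hd⟩ : X G H))⁻¹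
    rw [← cOf_eq_of q, ← cOf_eq_of ⟨(c, d), hc, hd⟩]
    simp only [GammaGHom_cOf, GammaHHom_cOf, map_mul, map_inv, cOf_one_left, cOf_one_right,
      mul_inv_cancel, inv_mul_cancel, mul_inv_cancel_left, inv_mul_cancel_left, one_mul, mul_one]
    group
  | inv_of q ih =>
    rw [key] at ih ⊢
    simp only [map_inv, ih]
    group
  | mul x y ihx ihy =>
    rw [key] at ihx ihy ⊢
    simp only [map_mul, ihx, ihy]
    group

lemma gamma_Phi (w v : FreeGroup (X G H)) : gamma (Phi w) v = w * v * w⁻¹ := by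
  induction w using FreeGroup.induction_on generalizing v with
  | C1 => simp
  | of p => exact gamma_Phi_of p v
  | inv_of p ih =>
    show gamma (Phi (FreeGroup.of p)⁻¹) v = (FreeGroup.of p)⁻¹ * v * ((FreeGroup.of p)⁻¹)⁻¹
    have h2 : gamma (Phi (FreeGroup.of p)) (gamma (Phi (FreeGroup.of p)⁻¹) v) = v := by
      calc gamma (Phi (FreeGroup.of p)) (gamma (Phi (FreeGroup.of p)⁻¹) v)
          = (gamma (Phi (FreeGroup.of p)) * gamma (Phi (FreeGroup.of p)⁻¹)) v := rfl
        _ = gamma (Phi (FreeGroup.of p) * Phi (FreeGroup.of p)⁻¹) v := by rw [map_mul]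
        _ = v := by rw [← map_mul, mul_inv_cancel, map_one, map_one]; rfl
    rw [gamma_Phi_of] at h2
    generalize ht : gamma (Phi (FreeGroup.of p)⁻¹) v = t at h2 ⊢
    rw [← h2]
    group
  | mul x y ihx ihy =>
    show gamma (Phi (x * y)) v = _
    rw [map_mul, map_mul]
    show gamma (Phi x) (gamma (Phi y) v) = _
    rw [ihy, ihx]
    group


lemma rho_mul_fst (x : G ∗ H) :
    ∀ (v w : FreeGroup (X G H)) (a : G) (b : H),
      rho x (v * w, a, b) = (gamma x v * (rho x (w, a, b)).1, (rho x (w, a, b)).2) := by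
  induction x using Coprod.induction_on with
  | inl g =>
    intro v w a b
    show (GammaGHom g (v * w), g * a, b)
      = (gamma (inl g) v * (GammaGHom g w, g * a, b).1, (GammaGHom g w, g * a, b).2)
    rw [map_mul]
    show _ = (GammaGHom g v * GammaGHom g w, g * a, b)
    rfl
  | inr k =>
    intro v w a b
    show (GammaHHom k (v * w) * (cOf a k)⁻¹, a, k * b)
      = (gamma (inr k) v * ((GammaHHom k w * (cOf a k)⁻¹, a, k * b)).1,
          ((GammaHHom k w * (cOf a k)⁻¹, a, k * b)).2)
    rw [map_mul]
    show (GammaHHom k v * GammaHHom k w * (cOf a k)⁻¹, a, k * b)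
      = (GammaHHom k v * (GammaHHom k w * (cOf a k)⁻¹), a, k * b)
    rw [mul_assoc]
  | mul x y ihx ihy =>
    intro v w a b
    have e1 : rho (x * y) (v * w, a, b) = rho x (rho y (v * w, a, b)) := by
      rw [map_mul]; rfl
    have e2 : rho (x * y) (w, a, b) = rho x (rho y (w, a, b)) := by
      rw [map_mul]; rfl
    rw [e1, e2, ihy v w a b]
    have e3 : (gamma y v * (rho y (w, a, b)).1, (rho y (w, a, b)).2)
        = ((gamma y v) * (rho y (w, a, b)).1, (rho y (w, a, b)).2.1, (rho y (w, a, b)).2.2) := rfl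
    rw [e3, ihx]
    have e4 : gamma x (gamma y v) = gamma (x * y) v := by rw [map_mul]; rfl
    rw [e4]

lemma eval_triv : eval ((1 : FreeGroup (X G H)), (1 : G), (1 : H)) = 1 := by
  show Phi 1 * inl 1 * inr 1 = 1
  simp

lemma rho_snd_one (x : G ∗ H) (hx : Coprod.toProd x = 1) :
    (rho x (1, 1, 1)).2.1 = 1 ∧ (rho x (1, 1, 1)).2.2 = 1 := by
  have h := eval_rho x (1, 1, 1)
  rw [eval_triv, mul_one] at h
  have h2 := congrArg Coprod.toProd h
  rw [hx] at h2
  have h3 : Coprod.toProd (eval (rho x (1, 1, 1))) =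
      ((rho x (1, 1, 1)).2.1, (rho x (1, 1, 1)).2.2) := by
    show Coprod.toProd (Phi _ * inl _ * inr _) = _
    rw [map_mul, map_mul, toProd_Phi, one_mul, Coprod.toProd_apply_inl, Coprod.toProd_apply_inr]
    simp [Prod.ext_iff]
  rw [h3] at h2
  exact ⟨congrArg Prod.fst h2, congrArg Prod.snd h2⟩

@[simp] lemma rho_inl (g : G) : rho (inl g : G ∗ H) = rhoG g := Coprod.lift_apply_inl rhoG rhoH g

@[simp] lemma rho_inr (k : H) : rho (inr k : G ∗ H) = rhoH k := Coprod.lift_apply_inr rhoG rhoH k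

lemma rhoG_apply (g : G) (s : S G H) : rhoG g s = (GammaGHom g s.1, g * s.2.1, s.2.2) := rfl

lemma rhoH_apply (k : H) (s : S G H) :
    rhoH k s = (GammaHHom k s.1 * (cOf s.2.1 k)⁻¹, s.2.1, k * s.2.2) := rfl

lemma rho_mul_apply (x y : G ∗ H) (s : S G H) : rho (x * y) s = rho x (rho y s) := by
  rw [map_mul]; rfl

lemma rho_Phi (w : FreeGroup (X G H)) : rho (Phi w) (1, 1, 1) = (w, 1, 1) := by
  have hsnd : ∀ u : FreeGroup (X G H), (rho (Phi u) (1, 1, 1)).2.1 = 1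
      ∧ (rho (Phi u) (1, 1, 1)).2.2 = 1 := fun u => rho_snd_one _ (toProd_Phi u)
  have hinv : ∀ u : FreeGroup (X G H),
      rho (Phi u) (1, 1, 1) = (u, 1, 1) → rho (Phi u⁻¹) (1, 1, 1) = (u⁻¹, 1, 1) := by
    intro u hu
    obtain ⟨ha, hb⟩ := hsnd u⁻¹
    set t := (rho (Phi u⁻¹) ((1 : FreeGroup (X G H)), (1 : G), (1 : H))).1 with htdef
    have hs : rho (Phi u⁻¹) ((1 : FreeGroup (X G H)), (1 : G), (1 : H)) = (t, 1, 1) :=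
      Prod.ext rfl (Prod.ext ha hb)
    have hcomp : rho (Phi u) (rho (Phi u⁻¹) (1, 1, 1)) = (1, 1, 1) := by
      rw [← rho_mul_apply, ← map_mul, mul_inv_cancel, map_one, map_one]
      rfl
    rw [hs] at hcomp
    have h0 : rho (Phi u) (t * 1, 1, 1) = (1, 1, 1) := by rw [mul_one]; exact hcomp
    rw [rho_mul_fst, hu, gamma_Phi] at h0
    have h1 : u * t * u⁻¹ * u = 1 := congrArg Prod.fst h0
    have h2 : t = u⁻¹ := by
      calc t = u⁻¹ * (u * t * u⁻¹ * u) * u⁻¹ * u := by group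
        _ = u⁻¹ * 1 * u⁻¹ * u := by rw [h1]
        _ = u⁻¹ := by group
    rw [hs, h2]
  induction w using FreeGroup.induction_on with
  | C1 => rw [map_one, map_one]; rfl
  | of p =>
    show rho (Phi (FreeGroup.of p)) (1, 1, 1) = (FreeGroup.of p, 1, 1)
    obtain ⟨⟨c, d⟩, hc, hd⟩ := p
    rw [← cOf_eq_of ⟨(c, d), hc, hd⟩, Phi_cOf]
    rw [show ((inl c : G ∗ H))⁻¹ = inl c⁻¹ from (map_inv (inl : G →* G ∗ H) c).symm,
      show ((inr d : G ∗ H))⁻¹ = inr d⁻¹ from (map_inv (inr : H →* G ∗ H) d).symm]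
    rw [rho_mul_apply, rho_mul_apply, rho_mul_apply, rho_inl, rho_inr, rho_inl, rho_inr]
    have s1 : rhoH d⁻¹ ((1 : FreeGroup (X G H)), (1 : G), (1 : H)) = (1, 1, d⁻¹) := by
      rw [rhoH_apply]; simp
    have s2 : rhoG c⁻¹ ((1 : FreeGroup (X G H)), (1 : G), d⁻¹) = (1, c⁻¹, d⁻¹) := by
      rw [rhoG_apply]; simp
    have s3 : rhoH d ((1 : FreeGroup (X G H)), c⁻¹, d⁻¹) = ((cOf c⁻¹ d)⁻¹, c⁻¹, 1) := by
      rw [rhoH_apply]; simp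
    have s4 : rhoG c ((cOf c⁻¹ d)⁻¹, c⁻¹, (1 : H)) = (cOf c d, 1, 1) := by
      rw [rhoG_apply]
      refine Prod.ext ?_ (Prod.ext (by simp) rfl)
      show (GammaGHom c) ((cOf c⁻¹ d)⁻¹) = cOf c d
      rw [map_inv]
      simp
    rw [s1, s2, s3, s4]
  | inv_of p ih => exact hinv _ ih
  | mul x y ihx ihy =>
    show rho (Phi (x * y)) (1, 1, 1) = (x * y, 1, 1)
    rw [map_mul, rho_mul_apply, ihy]
    have e : ((y : FreeGroup (X G H)), (1 : G), (1 : H)) = (y * 1, 1, 1) := by rw [mul_one]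
    rw [e, rho_mul_fst, ihx, gamma_Phi]
    show (x * y * x⁻¹ * x, 1, 1) = (x * y, 1, 1)
    rw [inv_mul_cancel_right]


lemma Phi_injective : Function.Injective (Phi : FreeGroup (X G H) →* G ∗ H) := by
  rw [injective_iff_map_eq_one]
  intro w hw
  have h := rho_Phi (G := G) (H := H) w
  rw [hw, map_one] at h
  have h1 : ((1 : FreeGroup (X G H)), (1 : G), (1 : H)) = (w, 1, 1) := h
  exact (congrArg Prod.fst h1).symm

lemma mem_range_Phi {x : G ∗ H} (hx : Coprod.toProd x = 1) :
    x ∈ (Phi : FreeGroup (X G H) →* G ∗ H).range := by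
  have h := eval_rho x (1, 1, 1)
  rw [eval_triv, mul_one] at h
  obtain ⟨ha, hb⟩ := rho_snd_one x hx
  refine ⟨(rho x (1, 1, 1)).1, ?_⟩
  conv_rhs => rw [← h]
  show _ = Phi _ * inl _ * inr _
  rw [ha, hb, map_one, map_one, mul_one, mul_one]

end CoprodKernel

section Upper

variable {A B : Type*} [Group A] [Group B]

lemma Subgroup.FG.map' {K : Subgroup A} (hK : K.FG) (f : A →* B) : (K.map f).FG := by
  have h1 : Group.FG K := (Group.fg_iff_subgroup_fg K).mpr hK
  have h2 : Group.FG (K.map f) :=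
    @Group.fg_of_surjective _ _ _ _ h1 (f.subgroupMap K) (f.subgroupMap_surjective K)
  exact (Group.fg_iff_subgroup_fg _).mp h2

lemma locallyIndicable_of_injective (f : A →* B) (hf : Function.Injective f)
    (hB : LocallyIndicable B) : LocallyIndicable A := by
  intro K hK hKfg
  have h1 : K.map f ≠ ⊥ := fun hbot =>
    hK ((K.map_eq_bot_iff_of_injective hf).mp hbot)
  obtain ⟨χ, hχ⟩ := hB (K.map f) h1 (hKfg.map' f)
  exact ⟨χ.comp (Subgroup.equivMapOfInjective K f hf).toMonoidHom,
    hχ.comp (Subgroup.equivMapOfInjective K f hf).surjective⟩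

lemma locallyIndicable_extension (f : A →* B) (hker : LocallyIndicable f.ker)
    (hB : LocallyIndicable B) : LocallyIndicable A := by
  intro K hK hKfg
  by_cases hmap : K.map f = ⊥
  · have hle : K ≤ f.ker := (Subgroup.map_eq_bot_iff K).mp hmap
    have e : (K.subgroupOf f.ker) ≃* K := Subgroup.subgroupOfEquivOfLe hle
    have hK'bot : K.subgroupOf f.ker ≠ ⊥ := by
      intro hbot
      apply hK
      rw [eq_bot_iff]
      intro x hx
      have hx' : (⟨x, hle hx⟩ : f.ker) ∈ K.subgroupOf f.ker :=
        Subgroup.mem_subgroupOf.mpr hx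
      rw [hbot, Subgroup.mem_bot] at hx'
      have hx1 : x = 1 := congrArg Subtype.val hx'
      rw [hx1]
      exact Subgroup.one_mem ⊥
    have hK'fg : (K.subgroupOf f.ker).FG := by
      have h1 : Group.FG K := (Group.fg_iff_subgroup_fg K).mpr hKfg
      have h2 : Group.FG (K.subgroupOf f.ker) :=
        @Group.fg_of_surjective _ _ _ _ h1 e.symm.toMonoidHom e.symm.surjective
      exact (Group.fg_iff_subgroup_fg _).mp h2
    obtain ⟨χ, hχ⟩ := hker _ hK'bot hK'fg
    exact ⟨χ.comp e.symm.toMonoidHom, hχ.comp e.symm.surjective⟩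
  · obtain ⟨χ, hχ⟩ := hB (K.map f) hmap (hKfg.map' f)
    exact ⟨χ.comp (f.subgroupMap K), hχ.comp (f.subgroupMap_surjective K)⟩

lemma locallyIndicable_prod (hA : LocallyIndicable A) (hB : LocallyIndicable B) :
    LocallyIndicable (A × B) := by
  refine locallyIndicable_extension (MonoidHom.fst A B) ?_ hA
  refine locallyIndicable_of_injective
    ((MonoidHom.snd A B).comp (MonoidHom.fst A B).ker.subtype) ?_ hB
  rw [injective_iff_map_eq_one]
  intro x hx1
  have h1 : ((x : A × B)).1 = 1 := x.2
  exact Subtype.ext (Prod.ext h1 hx1)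

lemma locallyIndicable_freeGroup {α : Type*} : LocallyIndicable (FreeGroup α) := by
  intro K hK _
  haveI : IsFreeGroup K := inferInstance
  have hne : Nonempty (IsFreeGroup.Generators K) := by
    by_contra hemp
    rw [not_nonempty_iff] at hemp
    haveI : Subsingleton (FreeGroup (IsFreeGroup.Generators K)) := Unique.instSubsingleton
    haveI : Subsingleton K := (IsFreeGroup.toFreeGroup K).toEquiv.subsingleton
    exact hK (Subgroup.eq_bot_of_subsingleton K)
  obtain ⟨s0⟩ := hne
  let χ0 : FreeGroup (IsFreeGroup.Generators K) →* Multiplicative ℤ :=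
    FreeGroup.lift fun _ => Multiplicative.ofAdd 1
  have hsurj : Function.Surjective χ0 := by
    intro n
    refine ⟨(FreeGroup.of s0) ^ (Multiplicative.toAdd n), ?_⟩
    rw [map_zpow]
    show (χ0 (FreeGroup.of s0)) ^ _ = n
    rw [FreeGroup.lift_apply_of, ← ofAdd_zsmul, smul_eq_mul, mul_one]
    exact ofAdd_toAdd n
  exact ⟨χ0.comp (IsFreeGroup.toFreeGroup (↥K)).toMonoidHom,
    hsurj.comp (IsFreeGroup.toFreeGroup (↥K)).surjective⟩

end Upper



open CoprodKernel in
/-- If `H0` and `H1` are virtually locally indicable groups, then their free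
product `H0 * H1` is virtually locally indicable. -/
theorem virtuallyLocallyIndicable_coprod {H0 H1 : Type*} [Group H0] [Group H1]
    (h0 : VirtuallyLocallyIndicable H0) (h1 : VirtuallyLocallyIndicable H1) :
    VirtuallyLocallyIndicable (Monoid.Coprod H0 H1) := by
  obtain ⟨K0, hK0i, hK0⟩ := h0
  obtain ⟨K1, hK1i, hK1⟩ := h1
  refine ⟨(K0.prod K1).comap (Monoid.Coprod.toProd : Monoid.Coprod H0 H1 →* H0 × H1), ?_, ?_⟩
  · constructor
    rw [(K0.prod K1).index_comap_of_surjective Monoid.Coprod.toProd_surjective,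
      Subgroup.index_prod]
    exact mul_ne_zero hK0i.index_ne_zero hK1i.index_ne_zero
  · set P : Subgroup (Monoid.Coprod H0 H1) :=
      (K0.prod K1).comap (Monoid.Coprod.toProd : Monoid.Coprod H0 H1 →* H0 × H1) with hP
    let f0 : ↥P →* ↥(K0.prod K1) :=
      (Monoid.Coprod.toProd.comp P.subtype).codRestrict (K0.prod K1) (fun x => x.2)
    let f : ↥P →* ↥K0 × ↥K1 := (Subgroup.prodEquiv K0 K1).toMonoidHom.comp f0
    refine locallyIndicable_extension f ?_ (locallyIndicable_prod hK0 hK1)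
    have hker : ∀ x : f.ker, Monoid.Coprod.toProd ((x : ↥P) : Monoid.Coprod H0 H1) = 1 := by
      intro x
      have h2 : (Subgroup.prodEquiv K0 K1) (f0 (x : ↥P)) = 1 := MonoidHom.mem_ker.mp x.2
      have h1 : f0 (x : ↥P) = 1 := by
        have h3 := congrArg (Subgroup.prodEquiv K0 K1).symm h2
        simpa using h3
      have h5 : ((f0 (x : ↥P)) : H0 × H1) = 1 := by rw [h1]; rfl
      exact h5
    let e : FreeGroup (X H0 H1) ≃* (Phi : FreeGroup (X H0 H1) →* Monoid.Coprod H0 H1).range :=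
      MonoidHom.ofInjective Phi_injective
    let j0 : ↥f.ker →* ↥(Phi : FreeGroup (X H0 H1) →* Monoid.Coprod H0 H1).range :=
      (P.subtype.comp f.ker.subtype).codRestrict _ (fun x => mem_range_Phi (hker x))
    have hj0 : Function.Injective j0 := by
      intro x y hxy
      have h4 := congrArg Subtype.val hxy
      exact Subtype.ext (Subtype.ext h4)
    exact locallyIndicable_of_injective (e.symm.toMonoidHom.comp j0)
      (e.symm.injective.comp hj0) locallyIndicable_freeGroup
end

section
/- Let 1 → N → G → Q → 1 be a short exact sequence of groups in which N and Q are both locally indicable. Then G is locally indicable. -/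
/-- If `1 → N → G → Q → 1` is a short exact sequence of groups (here realized
as a surjection `φ : G → Q` with kernel `N`) and both `N` and `Q` are locally indicable,
then `G` is locally indicable. -/
theorem locallyIndicable_of_extension {G Q : Type*} [Group G] [Group Q]
    (φ : G →* Q) (hφ : Function.Surjective φ)
    (hN : LocallyIndicable φ.ker) (hQ : LocallyIndicable Q) :
    LocallyIndicable G := by
  intro H hH hFG
  by_cases hmap : H.map φ = ⊥
  · -- H ≤ ker φ
    have hle : H ≤ φ.ker := (Subgroup.map_eq_bot_iff H).mp hmap
    set K := H.subgroupOf φ.ker with hK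
    have e : K ≃* H := Subgroup.subgroupOfEquivOfLe hle
    have hKbot : K ≠ ⊥ := by
      intro h
      have hd : Disjoint H φ.ker := Subgroup.subgroupOf_eq_bot.mp h
      exact hH (hd.eq_bot_of_le hle)
    have hKFG : K.FG := by
      rw [← Group.fg_iff_subgroup_fg] at hFG ⊢
      exact Group.fg_of_surjective (f := e.symm.toMonoidHom) e.symm.surjective
    obtain ⟨χ, hχ⟩ := hN K hKbot hKFG
    exact ⟨χ.comp e.symm.toMonoidHom, hχ.comp e.symm.surjective⟩
  · have hFG' : (H.map φ).FG := by
      rw [← Group.fg_iff_subgroup_fg] at hFG ⊢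
      exact @Group.fg_of_surjective _ _ _ _ hFG _ (φ.subgroupMap_surjective H)
    obtain ⟨χ, hχ⟩ := hQ (H.map φ) hmap hFG'
    exact ⟨χ.comp (φ.subgroupMap H),
      hχ.comp (φ.subgroupMap_surjective H)⟩
end

section
/- Let p be a prime and let x ∈ Z_p (the p-adic integers) be a unit whose image in Q_p is irrational (not in the image of Q → Q_p). Let G = Z², and for each i ≥ 1 let G_i be the kernel of the homomorphism G → Z/p^i sending (m,n) to the residue of m·x − n mod p^i. Then [G : G_i] = p^i, G_{i+1} ⊆ G_i, ⋂_{i≥1} G_i = {0}, and no G_i is contained in the subgroup H = pZ × Z. -/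
/-- The additive homomorphism `ℤ × ℤ → ℤ_[p]`, `(m, n) ↦ m·x − n`. -/
noncomputable def padicPairHom (p : ℕ) [Fact p.Prime] (x : ℤ_[p]) : ℤ × ℤ →+ ℤ_[p] where
  toFun := fun mn => mn.1 • x - (mn.2 : ℤ_[p])
  map_zero' := by simp
  map_add' := by
    intro a b
    push_cast
    simp [add_smul]
    ring

/-- The homomorphism `ℤ² → ℤ/p^i` sending `(m, n)` to the residue of `m·x − n mod p^i`. -/
noncomputable def padicResHom (p : ℕ) [Fact p.Prime] (x : ℤ_[p]) (i : ℕ) :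
    ℤ × ℤ →+ ZMod (p ^ i) :=
  (PadicInt.toZModPow i).toAddMonoidHom.comp (padicPairHom p x)

lemma padicResHom_apply (p : ℕ) [Fact p.Prime] (x : ℤ_[p]) (i : ℕ) (mn : ℤ × ℤ) :
    padicResHom p x i mn = PadicInt.toZModPow i (mn.1 • x - (mn.2 : ℤ_[p])) := rfl

lemma padicResHom_surjective (p : ℕ) [Fact p.Prime] (x : ℤ_[p]) (i : ℕ) :
    Function.Surjective (padicResHom p x i) := by
  intro c
  refine ⟨(0, -(c.val : ℤ)), ?_⟩
  haveI : NeZero (p ^ i) := ⟨pow_ne_zero _ (Fact.out : p.Prime).pos.ne'⟩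
  simp [padicResHom_apply, ZMod.natCast_val, ZMod.cast_id]

/-- Let `p` be a prime and `x` a unit of `ℤ_[p]` whose image in `ℚ_[p]` is
irrational. For `G = ℤ²` let `Gᵢ` be the kernel of `(m,n) ↦ m·x − n mod p^i`. Then
`[G : Gᵢ] = p^i`, the `Gᵢ` form a descending chain with trivial intersection, and no `Gᵢ`
is contained in `H = pℤ × ℤ`. -/
theorem padic_kernel_chain (p : ℕ) [Fact p.Prime] (x : ℤ_[p]) (hx : IsUnit x)
    (hirr : ∀ r : ℚ, (x : ℚ_[p]) ≠ (r : ℚ_[p])) :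
    (∀ i : ℕ, ((padicResHom p x i).ker).index = p ^ i) ∧
    (∀ i : ℕ, (padicResHom p x (i + 1)).ker ≤ (padicResHom p x i).ker) ∧
    (⨅ i : ℕ, (padicResHom p x i).ker) = ⊥ ∧
    ∀ i : ℕ, ¬ (padicResHom p x i).ker ≤
      (AddSubgroup.zmultiples (p : ℤ)).prod (⊤ : AddSubgroup ℤ) := by
  refine ⟨?_, ?_, ?_, ?_⟩
  · intro i
    rw [AddSubgroup.index_ker]
    rw [AddMonoidHom.range_eq_top.mpr (padicResHom_surjective p x i)]
    rw [show Nat.card (⊤ : AddSubgroup (ZMod (p ^ i))) = Nat.card (ZMod (p ^ i)) from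
      Nat.card_congr AddSubgroup.topEquiv.toEquiv, Nat.card_zmod]
  · intro i mn hmn
    rw [AddMonoidHom.mem_ker, padicResHom_apply] at hmn ⊢
    rw [← PadicInt.zmod_cast_comp_toZModPow (p := p) i (i + 1) (Nat.le_succ i),
      RingHom.comp_apply, hmn, map_zero]
  · rw [eq_bot_iff]
    intro mn hmn
    simp only [AddSubgroup.mem_iInf, AddMonoidHom.mem_ker, padicResHom_apply] at hmn
    have heq : mn.1 • x - (mn.2 : ℤ_[p]) = 0 := by
      rw [← PadicInt.ext_of_toZModPow]
      intro n
      rw [hmn n, map_zero]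
    have hmx : (mn.1 : ℤ_[p]) * x = (mn.2 : ℤ_[p]) := by
      have := sub_eq_zero.mp heq
      simpa [zsmul_eq_mul] using this
    rcases eq_or_ne mn.1 0 with h1 | h1
    · have h2 : (mn.2 : ℤ_[p]) = 0 := by rw [← hmx, h1]; simp
      have h2' : mn.2 = 0 := by exact_mod_cast h2
      simp [AddSubgroup.mem_bot, Prod.ext_iff, h1, h2']
    · exfalso
      apply hirr ((mn.2 : ℚ) / (mn.1 : ℚ))
      have hQ : (mn.1 : ℚ_[p]) * (x : ℚ_[p]) = (mn.2 : ℚ_[p]) := by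
        exact_mod_cast congrArg (PadicInt.Coe.ringHom) hmx
      have hm1 : (mn.1 : ℚ_[p]) ≠ 0 := by exact_mod_cast h1
      field_simp [hm1]
      push_cast
      field_simp
      linear_combination hQ
  · intro i hle
    haveI : NeZero (p ^ i) := ⟨pow_ne_zero _ (Fact.out : p.Prime).pos.ne'⟩
    have hmem : (1, ((PadicInt.toZModPow i x).val : ℤ)) ∈ (padicResHom p x i).ker := by
      rw [AddMonoidHom.mem_ker, padicResHom_apply]
      simp [ZMod.natCast_val, ZMod.cast_id]
    have := hle hmem
    rw [AddSubgroup.mem_prod] at this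
    obtain ⟨h1, -⟩ := this
    rw [AddSubgroup.mem_zmultiples_iff] at h1
    obtain ⟨k, hk⟩ := h1
    have hdvd : (p : ℤ) ∣ 1 := ⟨k, by simpa [zsmul_eq_mul, mul_comm] using hk.symm⟩
    have h1 := Int.le_of_dvd one_pos hdvd
    have hp2 := (Fact.out : p.Prime).two_le
    omega
end

section
/- Let G be a nontrivial finite group acting freely on a connected finite 2-dimensional CW-complex X̄ with quotient X. If b_2(X̄; Q) = 0, then b_1(X̄; Q) ≥ 1, and consequently χ(X) = χ(X̄)/|G| ≤ 0. -/
/-- Let `G` be a nontrivial finite group acting freely on a connected finite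
2-dimensional CW-complex `X̄` with quotient `X`.  The data is encoded by the cellular
chain complex of `X̄` with rational coefficients: finite-dimensional `ℚ`-vector spaces
`C₂ → C₁ → C₀` with a `G`-action by chain maps (`ρᵢ`), each `Cᵢ` a free `ℚG`-module
(i.e. admitting a `ℚ`-basis indexed by `cells × G` which is freely permuted by `G`),
and `H₀(X̄;ℚ) ≅ ℚ` (connectedness).  If `b₂(X̄;ℚ) = 0` then `b₁(X̄;ℚ) ≥ 1`, and
consequently `χ(X) = χ(X̄)/|G| ≤ 0`, i.e. `χ(X̄) = dim C₀ − dim C₁ + dim C₂ ≤ 0`. -/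
theorem free_finite_group_action_on_two_complex
    {G : Type*} [Group G] [Finite G] [Nontrivial G]
    {C₀ C₁ C₂ : Type*}
    [AddCommGroup C₀] [AddCommGroup C₁] [AddCommGroup C₂]
    [Module ℚ C₀] [Module ℚ C₁] [Module ℚ C₂]
    [FiniteDimensional ℚ C₀] [FiniteDimensional ℚ C₁] [FiniteDimensional ℚ C₂]
    (ρ₀ : G →* (C₀ ≃ₗ[ℚ] C₀)) (ρ₁ : G →* (C₁ ≃ₗ[ℚ] C₁)) (ρ₂ : G →* (C₂ ≃ₗ[ℚ] C₂))
    (d₂ : C₂ →ₗ[ℚ] C₁) (d₁ : C₁ →ₗ[ℚ] C₀)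
    (hdd : d₁.comp d₂ = 0)
    (hequiv₁ : ∀ g : G, d₁.comp (ρ₁ g : C₁ →ₗ[ℚ] C₁) = (ρ₀ g : C₀ →ₗ[ℚ] C₀).comp d₁)
    (hequiv₂ : ∀ g : G, d₂.comp (ρ₂ g : C₂ →ₗ[ℚ] C₂) = (ρ₁ g : C₁ →ₗ[ℚ] C₁).comp d₂)
    (hfree₀ : ∃ (ι : Type) (_ : Finite ι) (b : Module.Basis (ι × G) ℚ C₀),
      ∀ (g : G) (j : ι) (h : G), ρ₀ g (b (j, h)) = b (j, g * h))
    (hfree₁ : ∃ (ι : Type) (_ : Finite ι) (b : Module.Basis (ι × G) ℚ C₁),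
      ∀ (g : G) (j : ι) (h : G), ρ₁ g (b (j, h)) = b (j, g * h))
    (hfree₂ : ∃ (ι : Type) (_ : Finite ι) (b : Module.Basis (ι × G) ℚ C₂),
      ∀ (g : G) (j : ι) (h : G), ρ₂ g (b (j, h)) = b (j, g * h))
    (hconn : Module.finrank ℚ (C₀ ⧸ LinearMap.range d₁) = 1)
    (hb₂ : Module.finrank ℚ (LinearMap.ker d₂) = 0) :
    1 ≤ Module.finrank ℚ
        (LinearMap.ker d₁ ⧸ (LinearMap.range d₂).comap (LinearMap.ker d₁).subtype) ∧
    (Module.finrank ℚ C₀ : ℤ) - Module.finrank ℚ C₁ + Module.finrank ℚ C₂ ≤ 0 := by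
  classical
  have := Fintype.ofFinite G
  -- dimensions are multiples of |G|
  obtain ⟨ι₀, hι₀, b₀, -⟩ := hfree₀
  obtain ⟨ι₁, hι₁, b₁b, -⟩ := hfree₁
  obtain ⟨ι₂, hι₂, b₂b, -⟩ := hfree₂
  have := Fintype.ofFinite ι₀
  have := Fintype.ofFinite ι₁
  have := Fintype.ofFinite ι₂
  have hdim₀ : Module.finrank ℚ C₀ = Fintype.card ι₀ * Fintype.card G := by
    rw [Module.finrank_eq_card_basis b₀, Fintype.card_prod]
  have hdim₁ : Module.finrank ℚ C₁ = Fintype.card ι₁ * Fintype.card G := by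
    rw [Module.finrank_eq_card_basis b₁b, Fintype.card_prod]
  have hdim₂ : Module.finrank ℚ C₂ = Fintype.card ι₂ * Fintype.card G := by
    rw [Module.finrank_eq_card_basis b₂b, Fintype.card_prod]
  have hG : 2 ≤ Fintype.card G := Fintype.one_lt_card
  -- range d₂ ≤ ker d₁
  have hle : LinearMap.range d₂ ≤ LinearMap.ker d₁ := by
    rintro x ⟨y, rfl⟩
    have : d₁ (d₂ y) = 0 := by
      have := congrArg (fun f => f y) hdd
      simpa using this
    simpa [LinearMap.mem_ker] using this
  -- rank-nullity identities
  have h₂ : Module.finrank ℚ (LinearMap.range d₂) + Module.finrank ℚ (LinearMap.ker d₂)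
      = Module.finrank ℚ C₂ := LinearMap.finrank_range_add_finrank_ker d₂
  have h₁ : Module.finrank ℚ (LinearMap.range d₁) + Module.finrank ℚ (LinearMap.ker d₁)
      = Module.finrank ℚ C₁ := LinearMap.finrank_range_add_finrank_ker d₁
  have h₀ : Module.finrank ℚ (C₀ ⧸ LinearMap.range d₁) +
      Module.finrank ℚ (LinearMap.range d₁) = Module.finrank ℚ C₀ :=
    Submodule.finrank_quotient_add_finrank _
  have hcomap : Module.finrank ℚ ((LinearMap.range d₂).comap (LinearMap.ker d₁).subtype)
      = Module.finrank ℚ (LinearMap.range d₂) :=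
    LinearEquiv.finrank_eq (Submodule.comapSubtypeEquivOfLe hle)
  have hq : Module.finrank ℚ
        (LinearMap.ker d₁ ⧸ (LinearMap.range d₂).comap (LinearMap.ker d₁).subtype) +
      Module.finrank ℚ ((LinearMap.range d₂).comap (LinearMap.ker d₁).subtype)
      = Module.finrank ℚ (LinearMap.ker d₁) :=
    Submodule.finrank_quotient_add_finrank _
  set B1 := Module.finrank ℚ
      (LinearMap.ker d₁ ⧸ (LinearMap.range d₂).comap (LinearMap.ker d₁).subtype) with hB1
  -- Euler characteristic computation
  have key : ((Fintype.card ι₀ : ℤ) - Fintype.card ι₁ + Fintype.card ι₂) *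
      (Fintype.card G : ℤ) = 1 - (B1 : ℤ) := by
    have e0 : (Module.finrank ℚ C₀ : ℤ) = (Fintype.card ι₀ : ℤ) * Fintype.card G := by
      exact_mod_cast congrArg (Nat.cast : ℕ → ℤ) hdim₀
    have e1 : (Module.finrank ℚ C₁ : ℤ) = (Fintype.card ι₁ : ℤ) * Fintype.card G := by
      exact_mod_cast congrArg (Nat.cast : ℕ → ℤ) hdim₁
    have e2 : (Module.finrank ℚ C₂ : ℤ) = (Fintype.card ι₂ : ℤ) * Fintype.card G := by
      exact_mod_cast congrArg (Nat.cast : ℕ → ℤ) hdim₂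
    have h₂' : (Module.finrank ℚ (LinearMap.range d₂) : ℤ) = Module.finrank ℚ C₂ := by
      rw [hb₂] at h₂; exact_mod_cast h₂
    have h₁' : (Module.finrank ℚ (LinearMap.range d₁) : ℤ) +
        Module.finrank ℚ (LinearMap.ker d₁) = Module.finrank ℚ C₁ := by exact_mod_cast h₁
    have h₀' : (1 : ℤ) + Module.finrank ℚ (LinearMap.range d₁) = Module.finrank ℚ C₀ := by
      rw [hconn] at h₀; exact_mod_cast h₀
    have hq' : (B1 : ℤ) + Module.finrank ℚ (LinearMap.range d₂)
        = Module.finrank ℚ (LinearMap.ker d₁) := by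
      rw [hcomap] at hq; exact_mod_cast hq
    linear_combination -e0 + e1 - e2 - h₀' + h₁' - h₂' + hq'
  -- conclude
  set e : ℤ := (Fintype.card ι₀ : ℤ) - Fintype.card ι₁ + Fintype.card ι₂ with he
  have hB1nonneg : (0 : ℤ) ≤ B1 := Int.natCast_nonneg _
  have hG' : (2 : ℤ) ≤ (Fintype.card G : ℤ) := by exact_mod_cast hG
  have hepos : e ≤ 0 := by
    by_contra h
    push_neg at h
    have h1 : (1 : ℤ) ≤ e := h
    have h2 : (Fintype.card G : ℤ) ≤ e * (Fintype.card G : ℤ) :=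
      le_mul_of_one_le_left (by linarith) h1
    linarith [key, hB1nonneg]
  have hemul : e * (Fintype.card G : ℤ) ≤ 0 :=
    mul_nonpos_of_nonpos_of_nonneg hepos (by linarith)
  have hB1ge : (1 : ℤ) ≤ (B1 : ℤ) := by linarith [key]
  constructor
  · exact_mod_cast hB1ge
  · have : (Module.finrank ℚ C₀ : ℤ) - Module.finrank ℚ C₁ + Module.finrank ℚ C₂
        = e * Fintype.card G := by
      rw [he]; push_cast [hdim₀, hdim₁, hdim₂]; ring
    rw [this]
    exact hemul
end

section
/- Let G be a group and S^{-1}FG an Ore localization of the group ring FG of G over a field F which is a division ring (e.g., G amenable locally indicable, S the nonzero elements). Let A ∈ M_n(ZG) and let Ā ∈ M_n(F_p G) be its reduction mod p. If the group ring F_p G has no non-trivial zero divisors and Ā is invertible over the Ore division ring of fractions S^{-1}F_p G, then A is invertible over the Ore division ring of fractions S^{-1}QG. -/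
/-- `ι : R → D` exhibits the division ring `D` as an Ore division ring of (left) fractions
of `R`: it is injective and every element of `D` is of the form `ι r · (ι s)⁻¹`. -/
def IsOreFractionRing {R D : Type*} [Ring R] [DivisionRing D] (ι : R →+* D) : Prop :=
  Function.Injective ι ∧ ∀ d : D, ∃ r s : R, s ≠ 0 ∧ d * ι s = ι r

section Aux

variable {R D : Type*} [Ring R] [DivisionRing D] {ι : R →+* D}

/-- Common (right) denominators for a finite family of elements of `D`. -/
lemma IsOreFractionRing.common_denom (h : IsOreFractionRing ι) :
    ∀ {n : ℕ} (v : Fin n → D),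
      ∃ s : R, ι s ≠ 0 ∧ ∃ r : Fin n → R, ∀ i, v i * ι s = ι (r i) := by
  intro n
  induction n with
  | zero => exact fun v => ⟨1, by simp, fun i => 1, fun i => i.elim0⟩
  | succ m ih =>
    intro v
    obtain ⟨s, hs, r, hr⟩ := ih (fun i => v i.succ)
    obtain ⟨t, u, hu, htu⟩ := h.2 (v 0 * ι s)
    refine ⟨s * u, ?_, Fin.cons t (fun i => r i * u), ?_⟩
    · rw [map_mul]
      exact mul_ne_zero hs (fun h0 => hu (h.1 (by simpa using h0)))
    · intro i
      refine Fin.cases ?_ ?_ i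
      · simpa [map_mul, mul_assoc] using htu
      · intro i
        simp only [Fin.cons_succ, map_mul, ← mul_assoc, hr i]

/-- A square matrix over a division ring whose `mulVec` has trivial kernel has a
right inverse. -/
lemma exists_right_inverse_of_mulVec_ker {n : ℕ} (M : Matrix (Fin n) (Fin n) D)
    (h : ∀ c : Fin n → D, M.mulVec c = 0 → c = 0) :
    ∃ C : Matrix (Fin n) (Fin n) D, M * C = 1 := by
  haveI : Module.Finite Dᵐᵒᵖ D := by
    refine ⟨⟨{1}, ?_⟩⟩
    rw [eq_top_iff]
    intro x _
    have : x = (MulOpposite.op x) • (1 : D) := by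
      simp [MulOpposite.smul_eq_mul_unop]
    rw [this]
    exact Submodule.smul_mem _ _ (Submodule.subset_span (by simp))
  let f : (Fin n → D) →ₗ[Dᵐᵒᵖ] (Fin n → D) :=
    { toFun := M.mulVec
      map_add' := fun x y => Matrix.mulVec_add M x y
      map_smul' := by
        intro a c
        funext i
        simp [Matrix.mulVec, dotProduct, MulOpposite.smul_eq_mul_unop,
          Finset.sum_mul, mul_assoc] }
  have hinj : Function.Injective f := by
    intro x y hxy
    have : M.mulVec (x - y) = 0 := by
      rw [Matrix.mulVec_sub]
      exact sub_eq_zero.mpr hxy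
    have := h _ this
    exact sub_eq_zero.mp this
  have hsurj : Function.Surjective M.mulVec :=
    LinearMap.injective_iff_surjective.mp hinj
  exact Matrix.mulVec_surjective_iff_exists_right_inverse.mp hsurj

lemma isUnit_of_mulVec_ker {n : ℕ} (M : Matrix (Fin n) (Fin n) D)
    (h : ∀ c : Fin n → D, M.mulVec c = 0 → c = 0) : IsUnit M := by
  obtain ⟨C, hC⟩ := exists_right_inverse_of_mulVec_ker M h
  have hCker : ∀ c : Fin n → D, C.mulVec c = 0 → c = 0 := by
    intro c hc
    have : (M * C).mulVec c = 0 := by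
      rw [← Matrix.mulVec_mulVec, hc, Matrix.mulVec_zero]
    simpa [hC] using this
  obtain ⟨C', hC'⟩ := exists_right_inverse_of_mulVec_ker C hCker
  have : C' = M := by
    calc C' = 1 * C' := (one_mul _).symm
    _ = (M * C) * C' := by rw [hC]
    _ = M * (C * C') := by rw [Matrix.mul_assoc]
    _ = M := by rw [hC', Matrix.mul_one]
  exact ⟨⟨M, C, hC, by rw [← this, hC']⟩, rfl⟩

/-- Kernel of `mulVec` of an invertible matrix is trivial (any ring). -/
lemma mulVec_ker_of_isUnit {S : Type*} [Ring S] {n : ℕ} {M : Matrix (Fin n) (Fin n) S}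
    (h : IsUnit M) : ∀ c : Fin n → S, M.mulVec c = 0 → c = 0 := by
  intro c hc
  obtain ⟨u, rfl⟩ := h
  have h2 := congrArg
    (fun w => Matrix.mulVec ((u⁻¹ : (Matrix (Fin n) (Fin n) S)ˣ).1) w) hc
  simp only [Matrix.mulVec_mulVec, Matrix.mulVec_zero] at h2
  rwa [Units.inv_mul, Matrix.one_mulVec] at h2

/-- Main abstract lemma: a square matrix over `R` whose `mulVec` kernel over `R` is
trivial becomes invertible over an Ore division ring of fractions of `R`. -/
lemma isUnit_map_of_mulVec_ker (h : IsOreFractionRing ι) {n : ℕ}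
    (B : Matrix (Fin n) (Fin n) R)
    (hB : ∀ r : Fin n → R, B.mulVec r = 0 → r = 0) : IsUnit (B.map ι) := by
  apply isUnit_of_mulVec_ker
  intro c hc
  obtain ⟨s, hs, r, hr⟩ := h.common_denom c
  have key : ∀ i, ι (B.mulVec r i) = 0 := by
    intro i
    have h1 : ι (B.mulVec r i) = ((B.map ι).mulVec c i) * ι s := by
      simp [Matrix.mulVec, dotProduct, map_sum, map_mul,
        Finset.sum_mul, mul_assoc, ← hr]
    rw [h1, hc]
    simp
  have hr0 : r = 0 := hB r (funext fun i => h.1 (by simpa using key i))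
  funext i
  have h2 : c i * ι s = 0 := by
    rw [hr i, hr0]; simp
  rcases mul_eq_zero.mp h2 with h0 | h0
  · exact h0
  · exact absurd h0 hs

end Aux

section MA
variable {G : Type*} [Group G]

instance monoidAlgebraCoeFunAux {R M : Type*} [Semiring R] :
    CoeFun (MonoidAlgebra R M) (fun _ => M → R) := ⟨fun x => x.coeff⟩

lemma coeff_hom {k : Type*} [Semiring k] (φ : MonoidAlgebra ℤ G →+* MonoidAlgebra k G)
    (f : ℤ →+* k)
    (hφ : ∀ (g : G) (a : ℤ), φ (MonoidAlgebra.single g a) = MonoidAlgebra.single g (f a))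
    (x : MonoidAlgebra ℤ G) (g : G) : φ x g = f (x g) := by
  classical
  induction x using MonoidAlgebra.induction with
  | zero => simp
  | single_add g' a y _ _ ih =>
    rw [map_add, hφ, MonoidAlgebra.coeff_add, MonoidAlgebra.coeff_add, Finsupp.add_apply,
      Finsupp.add_apply, ih, MonoidAlgebra.coeff_single, MonoidAlgebra.coeff_single,
      Finsupp.single_apply, Finsupp.single_apply]
    rcases eq_or_ne g' g with h | h <;> simp [h]

lemma mulVec_ringHom_map {S T : Type*} [Ring S] [Ring T] (φ : S →+* T) {n : ℕ}
    (M : Matrix (Fin n) (Fin n) S) (v : Fin n → S) (i : Fin n) :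
    (M.map φ).mulVec (fun k => φ (v k)) i = φ (M.mulVec v i) := by
  simp [Matrix.mulVec, dotProduct, map_sum, map_mul]

/-- Clearing denominators: every element of `ℚG` is, up to a positive integer multiple,
in the image of `j : ℤG → ℚG`. -/
lemma clear_denom (j : MonoidAlgebra ℤ G →+* MonoidAlgebra ℚ G)
    (hj : ∀ (g : G) (a : ℤ), j (MonoidAlgebra.single g a) = MonoidAlgebra.single g (a : ℚ))
    (x : MonoidAlgebra ℚ G) :
    ∃ (N : ℕ) (y : MonoidAlgebra ℤ G), N ≠ 0 ∧ j y = N • x := by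
  classical
  induction x using MonoidAlgebra.induction with
  | zero => exact ⟨1, 0, one_ne_zero, by simp⟩
  | single_add g q x' _ _ ih =>
    obtain ⟨N', z', hN', hz'⟩ := ih
    refine ⟨q.den * N', N' • MonoidAlgebra.single g q.num + q.den • z',
      Nat.mul_ne_zero q.den_nz hN', ?_⟩
    rw [map_add, map_nsmul, map_nsmul, hj, hz']
    have h1 : (MonoidAlgebra.single g (q.num : ℚ)) = q.den • MonoidAlgebra.single g q := by
      rw [← Nat.cast_smul_eq_nsmul ℚ, MonoidAlgebra.smul_single, smul_eq_mul, Rat.den_mul_eq_num]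
    rw [h1, smul_add, smul_smul, smul_smul, Nat.mul_comm N' q.den]

end MA

/-- Let `G` be a group such that the group rings `ℚG` and `𝔽_p G` are Ore
domains (e.g. `G` amenable locally indicable), with Ore division rings of fractions
`S⁻¹ℚG` and `S⁻¹𝔽_p G` (encoded abstractly as division rings `DQ`, `Dp` with injective
Ore-fraction embeddings `ιQ`, `ιp`).  Let `A` be a square matrix over `ℤG`, `Ā` its
reduction mod `p`, and suppose `𝔽_p G` has no non-trivial zero divisors.  If `Ā` is
invertible over `S⁻¹𝔽_p G`, then `A` is invertible over `S⁻¹ℚG`.  Here `j` and `π` are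
the coefficient-wise maps `ℤG → ℚG` and `ℤG → 𝔽_p G`, characterized on `single g a`. -/
theorem invertible_mod_p_implies_invertible_char_zero
    {G : Type*} [Group G] (p : ℕ) [Fact p.Prime]
    [NoZeroDivisors (MonoidAlgebra (ZMod p) G)]
    {DQ Dp : Type*} [DivisionRing DQ] [DivisionRing Dp]
    (ιQ : MonoidAlgebra ℚ G →+* DQ) (ιp : MonoidAlgebra (ZMod p) G →+* Dp)
    (hQ : IsOreFractionRing ιQ) (hp : IsOreFractionRing ιp)
    (j : MonoidAlgebra ℤ G →+* MonoidAlgebra ℚ G)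
    (hj : ∀ (g : G) (a : ℤ), j (MonoidAlgebra.single g a) = MonoidAlgebra.single g (a : ℚ))
    (π : MonoidAlgebra ℤ G →+* MonoidAlgebra (ZMod p) G)
    (hπ : ∀ (g : G) (a : ℤ),
      π (MonoidAlgebra.single g a) = MonoidAlgebra.single g (a : ZMod p))
    {n : ℕ} (A : Matrix (Fin n) (Fin n) (MonoidAlgebra ℤ G))
    (hA : IsUnit (A.map (ιp.comp π))) :
    IsUnit (A.map (ιQ.comp j)) := by
  classical
  have hpprime : p.Prime := Fact.out
  have hπc : ∀ (x : MonoidAlgebra ℤ G) (g : G), π x g = ((x g : ℤ) : ZMod p) :=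
    coeff_hom π (Int.castRingHom (ZMod p)) (fun g a => hπ g a)
  have hjc : ∀ (x : MonoidAlgebra ℤ G) (g : G), j x g = ((x g : ℤ) : ℚ) :=
    coeff_hom j (Int.castRingHom ℚ) (fun g a => hj g a)
  have hjinj : Function.Injective j := by
    intro x y hxy
    refine MonoidAlgebra.ext (Finsupp.ext fun g => ?_)
    have h := congrArg (fun z : MonoidAlgebra ℚ G => z g) hxy
    simp only [hjc] at h
    exact_mod_cast h
  -- `ιQ ∘ j` exhibits `DQ` as an Ore division ring of fractions of `ℤG`
  have frac : IsOreFractionRing (ιQ.comp j) := by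
    refine ⟨hQ.1.comp hjinj, fun d => ?_⟩
    obtain ⟨r, s, hs, hd⟩ := hQ.2 d
    obtain ⟨N1, y1, hN1, hy1⟩ := clear_denom j hj s
    obtain ⟨N2, y2, hN2, hy2⟩ := clear_denom j hj r
    refine ⟨N1 • y2, N2 • y1, ?_, ?_⟩
    · intro h0
      have h1 : j (N2 • y1) = 0 := by rw [h0, map_zero]
      rw [map_nsmul, hy1, smul_smul, ← Nat.cast_smul_eq_nsmul ℚ] at h1
      rcases smul_eq_zero.mp h1 with h2 | h2
      · exact (Nat.cast_ne_zero.mpr (Nat.mul_ne_zero hN2 hN1)) h2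
      · exact hs h2
    · show d * ιQ (j (N2 • y1)) = ιQ (j (N1 • y2))
      have e1 : j (N2 • y1) = (N2 * N1) • s := by rw [map_nsmul, hy1, smul_smul]
      have e2 : j (N1 • y2) = (N2 * N1) • r := by
        rw [map_nsmul, hy2, smul_smul, Nat.mul_comm]
      rw [e1, e2, map_nsmul, map_nsmul, mul_smul_comm, hd]
  -- `mulVec` kernel of `A` over `ℤG` is trivial, by `p`-adic descent
  set μ : (Fin n → MonoidAlgebra ℤ G) → ℕ :=
    fun r => ∑ i, (r i).coeff.support.sum (fun g => (r i g).natAbs) with hμdef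
  have hker : ∀ (N : ℕ) (r : Fin n → MonoidAlgebra ℤ G), μ r ≤ N → A.mulVec r = 0 → r = 0 := by
    intro N
    induction N with
    | zero =>
      intro r hle _
      funext i
      refine MonoidAlgebra.ext (Finsupp.ext fun g => ?_)
      by_contra hg
      have hmem : g ∈ (r i).coeff.support := Finsupp.mem_support_iff.mpr (by simpa using hg)
      have h1 : ∑ i, (r i).coeff.support.sum (fun g => (r i g).natAbs) = 0 := by
        have := Nat.le_zero.mp hle
        simpa [hμdef] using this
      have h2 := (Finset.sum_eq_zero_iff.mp h1) i (Finset.mem_univ i)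
      have h3 := (Finset.sum_eq_zero_iff.mp h2) g hmem
      exact hg (by simpa using Int.natAbs_eq_zero.mp h3)
    | succ N ih =>
      intro r hle h0
      by_cases hr : r = 0
      · exact hr
      -- the reduction of `r` mod `p` vanishes (since `Ā` is invertible)
      have hvec : (A.map (ιp.comp π)).mulVec (fun k => (ιp.comp π) (r k)) = 0 := by
        funext i
        rw [mulVec_ringHom_map (ιp.comp π) A r i]
        have h5 : A.mulVec r i = 0 := by simpa using congrFun h0 i
        rw [h5, map_zero]
        exact (Pi.zero_apply (M := fun _ => Dp) i).symm
      have hc0 := mulVec_ker_of_isUnit hA _ hvec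
      have hπr : ∀ i, π (r i) = 0 := by
        intro i
        apply hp.1
        have := congrFun hc0 i
        simpa using this
      -- divide `r` by `p`
      have hdvd : ∀ i g, (p : ℤ) ∣ r i g := by
        intro i g
        have h1 : ((r i g : ℤ) : ZMod p) = 0 := by
          rw [← hπc (r i) g, hπr i]
          simp
        exact_mod_cast (ZMod.intCast_zmod_eq_zero_iff_dvd _ p).mp h1
      set y : Fin n → MonoidAlgebra ℤ G :=
        fun i => MonoidAlgebra.ofCoeff (Finsupp.mapRange (fun a => a / (p : ℤ)) (by simp) (r i).coeff) with hydef
      have hry : ∀ i g, r i g = (p : ℤ) * y i g := by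
        intro i g
        have : y i g = r i g / (p : ℤ) := by
          rw [hydef]; simp [Finsupp.mapRange_apply]
        rw [this]
        exact (Int.mul_ediv_cancel' (hdvd i g)).symm
      have hrey : ∀ i, r i = (p : ℤ) • y i := by
        intro i
        refine MonoidAlgebra.ext (Finsupp.ext fun g => ?_)
        rw [MonoidAlgebra.coeff_smul_apply, smul_eq_mul]
        exact hry i g
      have hAy : A.mulVec y = 0 := by
        funext i
        have h2 : (p : ℤ) • (A.mulVec y i) = 0 := by
          have h3 : A.mulVec r i = (p : ℤ) • (A.mulVec y i) := by
            simp only [Matrix.mulVec, dotProduct, hrey, mul_smul_comm]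
            rw [Finset.smul_sum]
          have h4 : A.mulVec r i = 0 := by simpa using congrFun h0 i
          rw [← h3, h4]
        refine MonoidAlgebra.ext (Finsupp.ext fun g => ?_)
        have h3 := congrArg (fun z : MonoidAlgebra ℤ G => z g) h2
        simp only [MonoidAlgebra.coeff_smul_apply, smul_eq_mul, MonoidAlgebra.coeff_zero, Finsupp.coe_zero, Pi.zero_apply] at h3
        have hpz : (p : ℤ) ≠ 0 := Int.natCast_ne_zero.mpr hpprime.ne_zero
        rcases mul_eq_zero.mp h3 with h4 | h4
        · exact absurd h4 hpz
        · simpa using h4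
      -- support equality and measure decrease
      have hyrg : ∀ i g, y i g = 0 ↔ r i g = 0 := by
        intro i g
        constructor
        · intro h4
          rw [hry i g, h4, mul_zero]
        · intro h4
          rw [hry i g] at h4
          exact (mul_eq_zero.mp h4).resolve_left
            (Int.natCast_ne_zero.mpr hpprime.ne_zero)
      have hsupp : ∀ i, (y i).coeff.support = (r i).coeff.support := by
        intro i
        ext g
        simp only [Finsupp.mem_support_iff]
        exact not_congr (hyrg i g)
      obtain ⟨i0, hi0⟩ : ∃ i, r i ≠ 0 := by
        by_contra hall
        push_neg at hall
        exact hr (funext fun i => hall i)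
      obtain ⟨g0, hg0⟩ : ∃ g, r i0 g ≠ 0 := by
        by_contra hall
        push_neg at hall
        exact hi0 (MonoidAlgebra.ext (Finsupp.ext hall))
      have hnat : ∀ i g, (r i g).natAbs = p * (y i g).natAbs := by
        intro i g
        rw [hry i g, Int.natAbs_mul]
        simp
      have hlt : μ y < μ r := by
        simp only [hμdef]
        refine Finset.sum_lt_sum (fun i _ => ?_) ⟨i0, Finset.mem_univ i0, ?_⟩
        · rw [hsupp i]
          refine Finset.sum_le_sum fun g _ => ?_
          rw [hnat i g]
          exact Nat.le_mul_of_pos_left _ hpprime.pos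
        · rw [hsupp i0]
          refine Finset.sum_lt_sum (fun g _ => by
            rw [hnat i0 g]; exact Nat.le_mul_of_pos_left _ hpprime.pos)
            ⟨g0, Finsupp.mem_support_iff.mpr hg0, ?_⟩
          rw [hnat i0 g0]
          have hy0 : (y i0 g0).natAbs ≠ 0 := by
            intro h4
            exact hg0 (by rw [hry i0 g0, Int.natAbs_eq_zero.mp h4, mul_zero])
          have h2p : 2 ≤ p := hpprime.two_le
          have : 0 < (y i0 g0).natAbs := Nat.pos_of_ne_zero hy0
          calc (y i0 g0).natAbs < 2 * (y i0 g0).natAbs := by omega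
          _ ≤ p * (y i0 g0).natAbs := Nat.mul_le_mul_right _ h2p
      have hy0 : y = 0 := ih y (by omega) hAy
      funext i
      rw [hrey i, hy0]
      simp
  exact isUnit_map_of_mulVec_ker frac A (fun r h => hker (μ r) r le_rfl h)
end
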